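/- arXiv:1712.08246 — 2 statements merged into one kernel-verified Lean document; each statement's English description precedes it below -/
import Mathlib

section
/- Let n ≥ 1, let λ, μ, ν be partitions of n, let π be a permutation of Fin n whose orbit type is λ, and let ω₀ be any element of K_λ. Then the number of pairs (ω₁, ω₂) ∈ K_μ × K_ν with ω₁∘ω₂ = ω₀ equals 2ⁿ·n! times the cardinality of G_{μ,ν}(π). (In other words, the connection coefficient b^λ_{μν} of the double coset algebra of (S_{2n}, B_n) satisfies b^λ_{μν} = |B_n|·|G^λ_{μν}|, where |B_n| = 2ⁿ·n!.) -/
/- For partitions λ, μ, ν of n, a permutation π of Fin n of orbit type λ, and any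
   ω₀ ∈ K_λ, the number of pairs (ω₁, ω₂) ∈ K_μ × K_ν with ω₁∘ω₂ = ω₀ equals
   2ⁿ·n! times |G_{μ,ν}(π)|:  b^λ_{μν} = |B_n|·|G^λ_{μν}| with |B_n| = 2ⁿ·n!. -/

open Equiv

/-- The orbit type of a permutation: the multiset of sizes of the orbits of the cyclic
    group it generates, i.e. its cycle lengths with each fixed point contributing a
    part equal to 1. -/
noncomputable def orbitType {X : Type} [Fintype X] [DecidableEq X]
    (ω : Equiv.Perm X) : Multiset ℕ :=
  ω.cycleType + Multiset.replicate (Finset.univ.filter fun x => ω x = x).card 1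

/-- A matching on V: a fixed-point-free involution. -/
def IsMatching {V : Type} (δ : Equiv.Perm V) : Prop :=
  (∀ v, δ (δ v) = v) ∧ ∀ v, δ v ≠ v

/-- The canonical matching g : inl i ↦ inr i, inr i ↦ inl i. -/
def gMatch (n : ℕ) : Equiv.Perm (Fin n ⊕ Fin n) := Equiv.sumComm (Fin n) (Fin n)

/-- The matching b_π : inr i ↦ inl (π i), inl j ↦ inr (π⁻¹ j). -/
def bMatch {n : ℕ} (π : Equiv.Perm (Fin n)) : Equiv.Perm (Fin n ⊕ Fin n) :=
  (Equiv.sumCongr (π⁻¹ : Equiv.Perm (Fin n)) π).trans (Equiv.sumComm (Fin n) (Fin n))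

/-- G_{μ,ν}(π): the matchings δ with orbit type of g∘δ equal to μ ⊎ μ and orbit type
    of b_π∘δ equal to ν ⊎ ν. -/
def Gset {n : ℕ} (μ ν : Multiset ℕ) (π : Equiv.Perm (Fin n)) :
    Set (Equiv.Perm (Fin n ⊕ Fin n)) :=
  {δ | IsMatching δ ∧ orbitType (gMatch n * δ) = μ + μ ∧ orbitType (bMatch π * δ) = ν + ν}

/-- K_μ: the permutations ω of Fin n ⊕ Fin n such that the orbit type of g∘ω∘g∘ω⁻¹
    equals μ ⊎ μ. -/
def Kset {n : ℕ} (μ : Multiset ℕ) : Set (Equiv.Perm (Fin n ⊕ Fin n)) :=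
  {ω | orbitType (gMatch n * ω * gMatch n * ω⁻¹) = μ + μ}

/-!
Write `g = gMatch n` and `e₀ = ω₀ g ω₀⁻¹`. For a pair `ω₁ ω₂ = ω₀` both conditions only depend
on the matching `δ = ω₁ g ω₁⁻¹`: `ω₁ ∈ K_μ` says that `g δ` has orbit type `μ ⊎ μ`, and
`ω₂ ∈ K_ν` says that `e₀ δ` has orbit type `ν ⊎ ν`. Every matching is such a `δ`, and the `ω₁`
giving the same `δ` form a coset of the centralizer of `g`, a group of order `2ⁿ n!`.

It remains to replace `e₀` by `b_π`. A matching `a` inverts `a b` for any other matching `b`, and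
a cycle of `a b` together with its image under `a` is a copy of a standard model determined by
the cycle length alone. Hence two pairs of matchings whose products have the same orbit type are
simultaneously conjugate. Since `g e₀` and `g b_π` both have orbit type `λ ⊎ λ`, some `c` fixes `g`
and conjugates `e₀` to `b_π`, and `δ ↦ c δ c⁻¹` maps the matchings above onto `G_{μ,ν}(π)`.
-/

open Function Finset

section MinimalPeriod

variable {X Y : Type}

lemma isPeriodicPt_perm_iff {ω : Perm X} {x : X} {d : ℕ} :
    IsPeriodicPt ω d x ↔ (ω ^ d) x = x := by
  rw [IsPeriodicPt, IsFixedPt, Perm.coe_pow]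

lemma minimalPeriod_perm_pos [Finite X] (ω : Perm X) (x : X) : 0 < minimalPeriod ω x :=
  minimalPeriod_pos_of_mem_periodicPts (ω.injective.mem_periodicPts x)

lemma minimalPeriod_apply_of_semiconj {fa : X → X} {fb : Y → Y} {f : X → Y} (hf : Injective f)
    (h : Semiconj f fa fb) (x : X) : minimalPeriod fb (f x) = minimalPeriod fa x :=
  minimalPeriod_eq_minimalPeriod_iff.2 fun n => by
    simp only [IsPeriodicPt, IsFixedPt, ← (h.iterate_right n) x, hf.eq_iff]

end MinimalPeriod

section PeriodCount

variable {X Y : Type} [Fintype X] [Fintype Y]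

noncomputable def periodCount (ω : Perm X) (k : ℕ) : ℕ := #{x | minimalPeriod ω x = k}

lemma periodCount_zero (ω : Perm X) : periodCount ω 0 = 0 := by
  simp [periodCount, (minimalPeriod_perm_pos ω _).ne']

lemma periodCount_permCongr (e : X ≃ Y) (ω : Perm X) :
    periodCount (e.permCongr ω) = periodCount ω := by
  funext k
  refine card_equiv e.symm fun y => ?_
  simp only [mem_filter, mem_univ, true_and]
  rw [minimalPeriod_apply_of_semiconj e.symm.injective (fa := e.permCongr ω) (fb := ω)
    (fun y => by simp)]

lemma periodCount_sumCongr (σ : Perm X) (τ : Perm Y) (k : ℕ) :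
    periodCount (Perm.sumCongr σ τ) k = periodCount σ k + periodCount τ k := by
  have hl := minimalPeriod_apply_of_semiconj Sum.inl_injective
    (fa := σ) (fb := Perm.sumCongr σ τ) (fun _ => rfl)
  have hr := minimalPeriod_apply_of_semiconj Sum.inr_injective
    (fa := τ) (fb := Perm.sumCongr σ τ) (fun _ => rfl)
  simp only [periodCount, ← Fintype.card_subtype]
  rw [Fintype.card_congr Equiv.subtypeSum, Fintype.card_sum]
  simp only [hl, hr]

lemma periodCount_inv (ω : Perm X) : periodCount ω⁻¹ = periodCount ω := by
  funext k
  simp only [periodCount]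
  congr! 3 with x
  exact MulAction.period_inv ω x

end PeriodCount

section OrbitType

variable {X Y : Type} [Fintype X] [DecidableEq X] [Fintype Y] [DecidableEq Y]

lemma minimalPeriod_eq_card_support_cycleOf {ω : Perm X} {x : X} (hx : x ∈ ω.support) :
    minimalPeriod ω x = #(ω.cycleOf x).support := by
  refine Nat.dvd_right_iff_eq.1 fun d => ?_
  rw [← isPeriodicPt_iff_minimalPeriod_dvd, isPeriodicPt_perm_iff,
    (ω.isCycleOn_support_cycleOf x).pow_apply_eq (Perm.mem_support_cycleOf_iff.2 ⟨.refl _ _, hx⟩)]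

lemma periodCount_one (ω : Perm X) : periodCount ω 1 = #{x | ω x = x} := by
  simp only [periodCount, minimalPeriod_eq_one_iff_isFixedPt, IsFixedPt]

lemma periodCount_eq_mul_card_cycleFactors (ω : Perm X) {k : ℕ} (hk : 2 ≤ k) :
    periodCount ω k = k * #{c ∈ ω.cycleFactorsFinset | #c.support = k} := by
  have hfib : ({x | minimalPeriod ω x = k} : Finset X) =
      {c ∈ ω.cycleFactorsFinset | #c.support = k}.biUnion Perm.support := by
    ext x
    simp only [mem_filter, mem_univ, true_and, mem_biUnion]
    constructor
    · intro hx
      have hmoved : x ∈ ω.support := Perm.mem_support.2 fun hfix => by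
        have := minimalPeriod_eq_one_iff_isFixedPt.2 hfix
        omega
      exact ⟨ω.cycleOf x, ⟨Perm.cycleOf_mem_cycleFactorsFinset_iff.2 hmoved,
        (minimalPeriod_eq_card_support_cycleOf hmoved) ▸ hx⟩,
        Perm.mem_support_cycleOf_iff.2 ⟨.refl _ _, hmoved⟩⟩
    · rintro ⟨c, ⟨hc, rfl⟩, hxc⟩
      rw [minimalPeriod_eq_card_support_cycleOf (Perm.mem_cycleFactorsFinset_support_le hc hxc),
        ← Perm.cycle_is_cycleOf hxc hc]
  rw [periodCount, hfib, card_biUnion, sum_congr rfl fun c hc => (mem_filter.1 hc).2, sum_const,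
    smul_eq_mul, mul_comm]
  intro c hc d hd hcd
  exact (ω.cycleFactorsFinset_pairwise_disjoint (mem_filter.1 hc).1 (mem_filter.1 hd).1
    hcd).disjoint_support

lemma zero_notMem_orbitType (ω : Perm X) : 0 ∉ orbitType ω := by
  simp only [orbitType, Multiset.mem_add, Multiset.mem_replicate, not_or]
  exact ⟨fun h => by simpa using Perm.two_le_of_mem_cycleType h, by simp⟩

lemma mul_count_orbitType (ω : Perm X) (k : ℕ) : k * (orbitType ω).count k = periodCount ω k := by
  have hcycle : ω.cycleType.count k = #{c ∈ ω.cycleFactorsFinset | #c.support = k} := by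
    simp only [Perm.cycleType_def, Multiset.count_map, Finset.card, Finset.filter_val,
      comp_apply, eq_comm]
    congr
  rcases Nat.lt_or_ge k 2 with hk | hk
  · interval_cases k
    · simp [periodCount_zero]
    · rw [periodCount_one, orbitType, Multiset.count_add, Multiset.count_replicate_self,
        Multiset.count_eq_zero.2 fun h => by simpa using Perm.two_le_of_mem_cycleType h, one_mul,
        zero_add]
  · rw [periodCount_eq_mul_card_cycleFactors ω hk, orbitType, Multiset.count_add, hcycle,
      Multiset.count_replicate, if_neg (by omega), add_zero]

lemma orbitType_eq_orbitType_iff {ω₁ : Perm X} {ω₂ : Perm Y} :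
    orbitType ω₁ = orbitType ω₂ ↔ periodCount ω₁ = periodCount ω₂ := by
  refine ⟨fun h => funext fun k => by rw [← mul_count_orbitType, h, mul_count_orbitType],
    fun h => Multiset.ext.2 fun k => ?_⟩
  rcases Nat.eq_zero_or_pos k with rfl | hk
  · simp only [Multiset.count_eq_zero.2 (zero_notMem_orbitType _)]
  · refine Nat.eq_of_mul_eq_mul_left hk ?_
    rw [mul_count_orbitType, mul_count_orbitType, h]

lemma orbitType_permCongr (e : X ≃ Y) (ω : Perm X) : orbitType (e.permCongr ω) = orbitType ω :=
  orbitType_eq_orbitType_iff.2 (periodCount_permCongr e ω)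

lemma orbitType_conj (c ω : Perm X) : orbitType (c * ω * c⁻¹) = orbitType ω := by
  rw [← Equiv.permCongr_eq_mul, orbitType_permCongr]

lemma orbitType_inv (ω : Perm X) : orbitType ω⁻¹ = orbitType ω :=
  orbitType_eq_orbitType_iff.2 (periodCount_inv ω)

lemma orbitType_sumCongr (σ : Perm X) (τ : Perm Y) :
    orbitType (Perm.sumCongr σ τ) = orbitType σ + orbitType τ := by
  ext k
  rcases Nat.eq_zero_or_pos k with rfl | hk
  · simp only [Multiset.count_add, Multiset.count_eq_zero.2 (zero_notMem_orbitType _)]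
  · refine Nat.eq_of_mul_eq_mul_left hk ?_
    rw [Multiset.count_add, mul_add]
    simp only [mul_count_orbitType, periodCount_sumCongr]

lemma exists_minimalPeriod_eq_of_orbitType_eq {ω₁ : Perm X} {ω₂ : Perm Y}
    (h : orbitType ω₁ = orbitType ω₂) (x : X) : ∃ y, minimalPeriod ω₂ y = minimalPeriod ω₁ x := by
  have hpos : 0 < periodCount ω₁ (minimalPeriod ω₁ x) := card_pos.2 ⟨x, by simp⟩
  rw [orbitType_eq_orbitType_iff.1 h] at hpos
  obtain ⟨y, hy⟩ := card_pos.1 hpos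
  exact ⟨y, (mem_filter.1 hy).2⟩

end OrbitType

section Matching

variable {X Y : Type}

lemma IsMatching.mul_self_eq_one {δ : Perm X} (h : IsMatching δ) : δ * δ = 1 := Perm.ext h.1

lemma IsMatching.inv_eq {δ : Perm X} (h : IsMatching δ) : δ⁻¹ = δ :=
  inv_eq_of_mul_eq_one_right h.mul_self_eq_one

lemma isMatching_permCongr_iff (e : X ≃ Y) {δ : Perm X} :
    IsMatching (e.permCongr δ) ↔ IsMatching δ := by
  constructor
  · intro h
    exact ⟨fun x => by simpa using h.1 (e x), fun x hx => h.2 (e x) (by simp [hx])⟩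
  · intro h
    exact ⟨fun y => by simp [h.1], fun y hy => h.2 (e.symm y) (e.injective (by simpa using hy))⟩

lemma IsMatching.conj {δ : Perm X} (h : IsMatching δ) (c : Perm X) : IsMatching (c * δ * c⁻¹) := by
  rwa [← permCongr_eq_mul, isMatching_permCongr_iff]

lemma IsMatching.of_sumCongr_right {α : Perm X} {β : Perm Y} (h : IsMatching (Perm.sumCongr α β)) :
    IsMatching β :=
  ⟨fun y => Sum.inr_injective (h.1 (.inr y)), fun y hy => h.2 (.inr y) (by simp [hy])⟩

lemma IsMatching.mul_zpow_eq_zpow_neg_mul {a b : Perm X} (ha : IsMatching a) (hb : IsMatching b)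
    (t : ℤ) : a * (a * b) ^ t = (a * b) ^ (-t) * a := by
  have hinv : a * (a * b) * a⁻¹ = (a * b)⁻¹ := by
    rw [mul_inv_rev, ha.inv_eq, hb.inv_eq, ← mul_assoc, ha.mul_self_eq_one, one_mul]
  rw [zpow_neg, ← inv_zpow, ← hinv, conj_zpow, inv_mul_cancel_right]

lemma IsMatching.apply_zpow_apply_ne {a b : Perm X} (ha : IsMatching a) (hb : IsMatching b)
    (x : X) (i j : ℤ) : a (((a * b) ^ i) x) ≠ ((a * b) ^ j) x := by
  set p := a * b
  intro hij
  have key (s : ℤ) : a ((p ^ s) x) = (p ^ (i + j - s)) x := by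
    calc a ((p ^ s) x) = (a * p ^ (s - i)) ((p ^ i) x) := by
          rw [Perm.mul_apply, ← Perm.mul_apply (p ^ _), ← zpow_add, sub_add_cancel]
      _ = (p ^ (i + j - s)) x := by
          rw [ha.mul_zpow_eq_zpow_neg_mul hb, Perm.mul_apply, hij, ← Perm.mul_apply, ← zpow_add]
          congr 2; ring
  -- `key` makes `a` a reflection of the orbit about `(i + j) / 2`, so `a` or `b` has a fixed point
  obtain ⟨s, hs⟩ | ⟨s, hs⟩ := Int.even_or_odd (i + j)
  · exact ha.2 ((p ^ s) x) (by rw [key s]; congr 2; omega)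
  · refine hb.2 ((p ^ s) x) ?_
    calc b ((p ^ s) x) = a ((p ^ (1 + s)) x) := by
          rw [zpow_one_add, Perm.mul_apply, ← Perm.mul_apply a p, ← mul_assoc,
            ha.mul_self_eq_one, one_mul]
      _ = (p ^ s) x := by rw [key]; congr 2; omega

end Matching

section Walk

variable {X : Type}

lemma zpow_apply_eq_zpow_apply_iff {p : Perm X} {x : X} {k : ℕ} (hk : minimalPeriod p x = k)
    {i j : ℤ} : (p ^ i) x = (p ^ j) x ↔ (i : ZMod k) = j := by
  have hsplit : (p ^ j) x = (p ^ i) ((p ^ (j - i)) x) := by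
    rw [← Perm.mul_apply, ← zpow_add, add_sub_cancel]
  rw [hsplit, (p ^ i).injective.eq_iff, eq_comm, ZMod.intCast_eq_intCast_iff_dvd_sub, ← hk,
    ← Perm.smul_def, MulAction.zpow_smul_eq_iff_minimalPeriod_dvd]
  rfl

/-- For `k` the minimal period of `x`, this parametrizes the `p`-orbit of `x` by `ZMod k`. -/
noncomputable def zmodWalk (p : Perm X) (x : X) (k : ℕ) (j : ZMod k) : X := (p ^ (j.cast : ℤ)) x

variable {p : Perm X} {x : X} {k : ℕ}

lemma zmodWalk_intCast (hk : minimalPeriod p x = k) (t : ℤ) : zmodWalk p x k t = (p ^ t) x :=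
  (zpow_apply_eq_zpow_apply_iff hk).2 (ZMod.intCast_zmod_cast _)

lemma zmodWalk_injective (hk : minimalPeriod p x = k) : Injective (zmodWalk p x k) := by
  intro i j hij
  obtain ⟨s, rfl⟩ := ZMod.intCast_surjective i
  obtain ⟨t, rfl⟩ := ZMod.intCast_surjective j
  rwa [zmodWalk_intCast hk, zmodWalk_intCast hk, zpow_apply_eq_zpow_apply_iff hk] at hij

lemma zpow_apply_zmodWalk (hk : minimalPeriod p x = k) (t : ℤ) (j : ZMod k) :
    (p ^ t) (zmodWalk p x k j) = zmodWalk p x k (j + t) := by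
  obtain ⟨s, rfl⟩ := ZMod.intCast_surjective j
  rw [zmodWalk_intCast hk, ← Int.cast_add, zmodWalk_intCast hk, ← Perm.mul_apply, ← zpow_add,
    add_comm]

end Walk

section Model

/-- A cycle of length `k` of `a * b` and its image under `a`, for matchings `a` and `b`, look like
`ZMod k ⊕ ZMod k` with `a` swapping the two copies and `a * b` rotating them in opposite
directions. -/
def modelA (k : ℕ) : Perm (ZMod k ⊕ ZMod k) := Equiv.sumComm _ _

def modelMul (k : ℕ) : Perm (ZMod k ⊕ ZMod k) :=
  Perm.sumCongr (Equiv.addRight 1) (Equiv.addRight (-1))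

def modelB (k : ℕ) : Perm (ZMod k ⊕ ZMod k) := modelA k * modelMul k

variable {X : Type} {a b : Perm X} {x : X} {k : ℕ}

noncomputable def matchingWalk (a b : Perm X) (x : X) (k : ℕ) : ZMod k ⊕ ZMod k → X :=
  Sum.elim (zmodWalk (a * b) x k) (a ∘ zmodWalk (a * b) x k)

lemma matchingWalk_injective (ha : IsMatching a) (hb : IsMatching b)
    (hk : minimalPeriod (a * b) x = k) : Injective (matchingWalk a b x k) := by
  have hwalk := zmodWalk_injective hk
  have hdisj (i j : ZMod k) : zmodWalk (a * b) x k i ≠ a (zmodWalk (a * b) x k j) := by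
    obtain ⟨s, rfl⟩ := ZMod.intCast_surjective i
    obtain ⟨t, rfl⟩ := ZMod.intCast_surjective j
    rw [zmodWalk_intCast hk, zmodWalk_intCast hk]
    exact (ha.apply_zpow_apply_ne hb x t s).symm
  rintro (i | i) (j | j) hij
  · exact congrArg Sum.inl (hwalk hij)
  · exact absurd hij (hdisj i j)
  · exact absurd hij.symm (hdisj j i)
  · exact congrArg Sum.inr (hwalk (a.injective hij))

lemma apply_matchingWalk_left (ha : IsMatching a) (z : ZMod k ⊕ ZMod k) :
    a (matchingWalk a b x k z) = matchingWalk a b x k (modelA k z) := by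
  rcases z with j | j
  · rfl
  · exact ha.1 _

lemma mul_apply_matchingWalk (ha : IsMatching a) (hb : IsMatching b)
    (hk : minimalPeriod (a * b) x = k) (z : ZMod k ⊕ ZMod k) :
    (a * b) (matchingWalk a b x k z) = matchingWalk a b x k (modelMul k z) := by
  rcases z with j | j
  · have h := zpow_apply_zmodWalk hk 1 j
    rw [zpow_one, Int.cast_one] at h
    exact h
  · calc (a * b) (a (zmodWalk (a * b) x k j))
          = a (((a * b) ^ (-1 : ℤ)) (zmodWalk (a * b) x k j)) := by
          rw [← Perm.mul_apply, ← Perm.mul_apply a, ha.mul_zpow_eq_zpow_neg_mul hb, neg_neg,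
            zpow_one]
      _ = a (zmodWalk (a * b) x k (j + -1)) := by
          rw [zpow_apply_zmodWalk hk, Int.cast_neg, Int.cast_one]

lemma apply_matchingWalk_right (ha : IsMatching a) (hb : IsMatching b)
    (hk : minimalPeriod (a * b) x = k) (z : ZMod k ⊕ ZMod k) :
    b (matchingWalk a b x k z) = matchingWalk a b x k (modelB k z) :=
  calc b (matchingWalk a b x k z) = a ((a * b) (matchingWalk a b x k z)) := by
        rw [← Perm.mul_apply a, ← mul_assoc, ha.mul_self_eq_one, one_mul]
    _ = matchingWalk a b x k (modelB k z) := by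
        rw [mul_apply_matchingWalk ha hb hk, apply_matchingWalk_left ha, modelB, Perm.mul_apply]

end Model

section Decomposition

variable {M X : Type} [Fintype X]

lemma exists_sumEquiv_of_injective {E : M → X} (hE : Injective E) :
    ∃ (X' : Type) (_ : Fintype X') (_ : DecidableEq X') (f : M ⊕ X' ≃ X),
      ∀ (α : Perm M) (a : Perm X), (∀ z, a (E z) = E (α z)) →
        ∃ a' : Perm X', f.permCongr (Perm.sumCongr α a') = a := by
  classical
  refine ⟨{x // x ∉ Set.range E}, inferInstance, inferInstance,
    (Equiv.sumCongr (Equiv.ofInjective E hE) (Equiv.refl _)).trans (Equiv.sumCompl _),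
    fun α a h => ?_⟩
  have hrange (x : X) : a x ∉ Set.range E ↔ x ∉ Set.range E := by
    refine not_congr ⟨fun ⟨z, hz⟩ => ⟨α⁻¹ z, a.injective ?_⟩, fun ⟨z, hz⟩ => ⟨α z, by rw [← hz, h]⟩⟩
    rw [h, ← Perm.mul_apply, mul_inv_cancel, Perm.one_apply, hz]
  refine ⟨a.subtypePerm hrange, Equiv.ext fun x => ?_⟩
  by_cases hx : x ∈ Set.range E
  · obtain ⟨z, rfl⟩ := hx
    simp [Equiv.sumCompl_symm_apply_of_pos, h]
  · simp [Equiv.sumCompl_symm_apply_of_neg hx]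

end Decomposition

section SimultaneousConjugacy

lemma exists_model_sumEquiv {X : Type} [Fintype X] {a b : Perm X} (ha : IsMatching a)
    (hb : IsMatching b) {x : X} {k : ℕ} (hk : minimalPeriod (a * b) x = k) :
    ∃ (X' : Type) (_ : Fintype X') (_ : DecidableEq X') (f : (ZMod k ⊕ ZMod k) ⊕ X' ≃ X)
      (a' b' : Perm X'), f.permCongr (Perm.sumCongr (modelA k) a') = a ∧
        f.permCongr (Perm.sumCongr (modelB k) b') = b := by
  obtain ⟨X', hfin, hdec, f, hf⟩ := exists_sumEquiv_of_injective (matchingWalk_injective ha hb hk)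
  obtain ⟨a', ha'⟩ := hf _ a (apply_matchingWalk_left ha)
  obtain ⟨b', hb'⟩ := hf _ b (apply_matchingWalk_right ha hb hk)
  exact ⟨X', hfin, hdec, f, a', b', ha', hb'⟩

lemma permCongr_trans_sumCongr {M X X' Y Y' : Type} (f : M ⊕ X' ≃ X) (g : M ⊕ Y' ≃ Y)
    (e : X' ≃ Y') (α : Perm M) (β : Perm X') :
    (f.symm.trans ((Equiv.sumCongr (Equiv.refl M) e).trans g)).permCongr
      (f.permCongr (Perm.sumCongr α β)) = g.permCongr (Perm.sumCongr α (e.permCongr β)) := by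
  ext y
  rcases h : g.symm y with z | z <;> simp [h]

lemma orbitType_permCongr_mul_sumCongr {M X X' : Type} [Fintype M] [DecidableEq M] [Fintype X]
    [DecidableEq X] [Fintype X'] [DecidableEq X'] (f : M ⊕ X' ≃ X) (α β : Perm M)
    (a b : Perm X') :
    orbitType (f.permCongr (Perm.sumCongr α a) * f.permCongr (Perm.sumCongr β b)) =
      orbitType (α * β) + orbitType (a * b) := by
  rw [← Equiv.permCongr_mul, orbitType_permCongr, Perm.sumCongr_mul, orbitType_sumCongr]

theorem exists_permCongr_eq_of_orbitType_eq {X Y : Type} [Fintype X] [DecidableEq X] [Fintype Y]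
    [DecidableEq Y] {a₁ b₁ : Perm X} {a₂ b₂ : Perm Y} (ha₁ : IsMatching a₁) (hb₁ : IsMatching b₁)
    (ha₂ : IsMatching a₂) (hb₂ : IsMatching b₂) (h : orbitType (a₁ * b₁) = orbitType (a₂ * b₂)) :
    ∃ e : X ≃ Y, e.permCongr a₁ = a₂ ∧ e.permCongr b₁ = b₂ := by
  induction hN : Fintype.card X using Nat.strong_induction_on generalizing X Y with
  | _ N ih =>
  rcases isEmpty_or_nonempty X with hX | ⟨⟨x⟩⟩
  · have : IsEmpty Y := ⟨fun y => by
      obtain ⟨x, -⟩ := exists_minimalPeriod_eq_of_orbitType_eq h.symm y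
      exact hX.elim x⟩
    exact ⟨equivOfIsEmpty X Y, Equiv.ext (isEmptyElim ·), Equiv.ext (isEmptyElim ·)⟩
  obtain ⟨k, hk⟩ : ∃ k, minimalPeriod (a₁ * b₁) x = k := ⟨_, rfl⟩
  have : NeZero k := ⟨hk ▸ (minimalPeriod_perm_pos _ _).ne'⟩
  obtain ⟨y, hy⟩ := exists_minimalPeriod_eq_of_orbitType_eq h x
  obtain ⟨X', _, _, f₁, a₁', b₁', hA₁, hB₁⟩ := exists_model_sumEquiv ha₁ hb₁ hk
  obtain ⟨Y', _, _, f₂, a₂', b₂', hA₂, hB₂⟩ := exists_model_sumEquiv ha₂ hb₂ (hy.trans hk)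
  subst hA₁ hB₁ hA₂ hB₂
  rw [isMatching_permCongr_iff] at ha₁ hb₁ ha₂ hb₂
  have hcard : Fintype.card X' < N := by
    rw [← hN, Fintype.card_congr f₁.symm, Fintype.card_sum, Fintype.card_sum, ZMod.card]
    have := NeZero.pos k
    omega
  rw [orbitType_permCongr_mul_sumCongr, orbitType_permCongr_mul_sumCongr] at h
  obtain ⟨e, rfl, rfl⟩ := ih _ hcard ha₁.of_sumCongr_right hb₁.of_sumCongr_right
    ha₂.of_sumCongr_right hb₂.of_sumCongr_right (add_left_cancel h) rfl
  exact ⟨_, permCongr_trans_sumCongr f₁ f₂ e _ _, permCongr_trans_sumCongr f₁ f₂ e _ _⟩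

end SimultaneousConjugacy

section MatchingCycleType

variable {X : Type} [Fintype X] [DecidableEq X] {δ : Perm X}

lemma IsMatching.sum_cycleType (h : IsMatching δ) : δ.cycleType.sum = Fintype.card X := by
  rw [Perm.sum_cycleType, ← card_univ]
  exact congrArg _ (eq_univ_iff_forall.2 fun x => Perm.mem_support.2 (h.2 x))

lemma IsMatching.cycleType_eq (h : IsMatching δ) :
    δ.cycleType = Multiset.replicate (Fintype.card X / 2) 2 := by
  have hrep := Perm.cycleType_of_pow_prime_eq_one (p := 2) (σ := δ)
    (by rw [pow_two, h.mul_self_eq_one])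
  have hsum := h.sum_cycleType
  rw [hrep, Multiset.sum_replicate, smul_eq_mul] at hsum
  rw [hrep]
  congr
  omega

lemma IsMatching.isConj {δ' : Perm X} (h : IsMatching δ) (h' : IsMatching δ') : IsConj δ δ' :=
  Perm.isConj_iff_cycleType_eq.2 (by rw [h.cycleType_eq, h'.cycleType_eq])

lemma IsMatching.nat_card_centralizer (h : IsMatching δ) :
    Nat.card (Subgroup.centralizer {δ}) =
      2 ^ (Fintype.card X / 2) * (Fintype.card X / 2).factorial := by
  rw [Perm.nat_card_centralizer, h.sum_cycleType, Nat.sub_self, h.cycleType_eq]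
  rcases Nat.eq_zero_or_pos (Fintype.card X / 2) with h0 | hpos
  · simp [h0]
  · simp [Multiset.toFinset_replicate, hpos.ne']

end MatchingCycleType

section GroupCounting

variable {G : Type} [Group G]

lemma ncard_pairs_mul_eq (A B : Set G) (c : G) :
    {w : G × G | w.1 ∈ A ∧ w.2 ∈ B ∧ w.1 * w.2 = c}.ncard = {x | x ∈ A ∧ x⁻¹ * c ∈ B}.ncard := by
  have himage : {w : G × G | w.1 ∈ A ∧ w.2 ∈ B ∧ w.1 * w.2 = c} =
      (fun x => (x, x⁻¹ * c)) '' {x | x ∈ A ∧ x⁻¹ * c ∈ B} := by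
    ext ⟨x, y⟩
    simp only [Set.mem_ofPred_eq, Set.mem_image, Prod.mk.injEq]
    constructor
    · rintro ⟨hx, hy, rfl⟩
      exact ⟨x, ⟨hx, by rwa [inv_mul_cancel_left]⟩, rfl, by rw [inv_mul_cancel_left]⟩
    · rintro ⟨x, ⟨hx, hy⟩, rfl, rfl⟩
      exact ⟨hx, hy, mul_inv_cancel_left x c⟩
  rw [himage, Set.ncard_image_of_injective _ fun x y h => (Prod.ext_iff.1 h).1]

lemma conj_mul_centralizer {g c : G} (hc : c ∈ Subgroup.centralizer {g}) (y : G) :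
    y * c * g * (y * c)⁻¹ = y * g * y⁻¹ := by
  rw [Subgroup.mem_centralizer_singleton_iff] at hc
  rw [mul_inv_rev, mul_assoc y c g, hc]
  group

lemma inv_mul_mem_centralizer_of_conj_eq {g x y : G} (h : y * g * y⁻¹ = x * g * x⁻¹) :
    y⁻¹ * x ∈ Subgroup.centralizer {g} := by
  rw [Subgroup.mem_centralizer_singleton_iff]
  calc y⁻¹ * x * g = y⁻¹ * (x * g * x⁻¹) * x := by group
    _ = g * (y⁻¹ * x) := by rw [← h]; group

/-- The fibres of `x ↦ x * g * x⁻¹` over the conjugates of `g` are the left cosets of the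
centralizer of `g`. -/
lemma ncard_conj_mem [Finite G] (g : G) {S : Set G} (hS : ∀ s ∈ S, IsConj g s) :
    {x : G | x * g * x⁻¹ ∈ S}.ncard = Nat.card (Subgroup.centralizer {g}) * S.ncard := by
  choose! y hy using fun s hs => isConj_iff.1 (hS s hs)
  let e : S × Subgroup.centralizer {g} ≃ {x : G | x * g * x⁻¹ ∈ S} :=
    { toFun := fun p => ⟨y p.1 * p.2, by
        simp only [Set.mem_ofPred_eq, conj_mul_centralizer p.2.2, hy _ p.1.2, Subtype.coe_prop]⟩
      invFun := fun x => (⟨_, x.2⟩, ⟨_, inv_mul_mem_centralizer_of_conj_eq (hy _ x.2)⟩)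
      left_inv := fun p => by
        have hs : y p.1 * p.2 * g * (y p.1 * p.2)⁻¹ = p.1 := by
          rw [conj_mul_centralizer p.2.2, hy _ p.1.2]
        exact Prod.ext (Subtype.ext hs) (Subtype.ext (by simp only [hs, inv_mul_cancel_left]))
      right_inv := fun x => Subtype.ext (mul_inv_cancel_left _ _) }
  rw [← Nat.card_coe_set_eq, ← Nat.card_congr e, Nat.card_prod, Nat.card_coe_set_eq, mul_comm]

end GroupCounting

section DoubleCoset

variable {n : ℕ}

lemma isMatching_gMatch : IsMatching (gMatch n) :=
  ⟨fun v => by cases v <;> rfl, fun v => by cases v <;> simp [gMatch]⟩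

lemma isMatching_bMatch (π : Perm (Fin n)) : IsMatching (bMatch π) :=
  ⟨fun v => by cases v <;> simp [bMatch], fun v => by cases v <;> simp [bMatch]⟩

lemma gMatch_mul_bMatch (π : Perm (Fin n)) : gMatch n * bMatch π = Perm.sumCongr π⁻¹ π := by
  ext (i | i) <;> rfl

lemma orbitType_gMatch_mul_bMatch (π : Perm (Fin n)) :
    orbitType (gMatch n * bMatch π) = orbitType π + orbitType π := by
  rw [gMatch_mul_bMatch, orbitType_sumCongr, orbitType_inv]

lemma mem_Kset_iff {μ : Multiset ℕ} (ω : Perm (Fin n ⊕ Fin n)) :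
    ω ∈ Kset μ ↔ orbitType (gMatch n * (ω * gMatch n * ω⁻¹)) = μ + μ := by
  simp only [Kset, Set.mem_ofPred_eq, mul_assoc]

lemma inv_mul_mem_Kset_iff {ν : Multiset ℕ} (ω ω₀ : Perm (Fin n ⊕ Fin n)) :
    ω⁻¹ * ω₀ ∈ Kset ν ↔
      orbitType (ω₀ * gMatch n * ω₀⁻¹ * (ω * gMatch n * ω⁻¹)) = ν + ν := by
  rw [Kset, Set.mem_ofPred_eq, ← orbitType_conj (gMatch n * ω⁻¹) (ω₀ * _ * _ * _)]
  congr! 2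
  group

lemma mem_Kset_and_inv_mul_mem_Kset_iff {μ ν : Multiset ℕ} {π : Perm (Fin n)}
    {ω₀ c : Perm (Fin n ⊕ Fin n)} (hcg : c * gMatch n * c⁻¹ = gMatch n)
    (hce : c * (ω₀ * gMatch n * ω₀⁻¹) * c⁻¹ = bMatch π) (ω : Perm (Fin n ⊕ Fin n)) :
    ω ∈ Kset μ ∧ ω⁻¹ * ω₀ ∈ Kset ν ↔ c * ω * gMatch n * (c * ω)⁻¹ ∈ Gset μ ν π := by
  set g := gMatch n
  have hδ : c * ω * g * (c * ω)⁻¹ = c * (ω * g * ω⁻¹) * c⁻¹ := by group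
  have hg : g * (c * (ω * g * ω⁻¹) * c⁻¹) = c * (g * (ω * g * ω⁻¹)) * c⁻¹ := by
    nth_rw 1 [← hcg]
    group
  have hb : bMatch π * (c * (ω * g * ω⁻¹) * c⁻¹) =
      c * (ω₀ * g * ω₀⁻¹ * (ω * g * ω⁻¹)) * c⁻¹ := by
    rw [← hce]
    group
  rw [mem_Kset_iff, inv_mul_mem_Kset_iff, hδ, Gset, Set.mem_ofPred_eq, hg, hb, orbitType_conj,
    orbitType_conj, iff_and_self]
  exact fun _ => (isMatching_gMatch.conj ω).conj c

end DoubleCoset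

theorem double_coset_connection_coefficients_general
    (n : ℕ) (l m v : Multiset ℕ)
    (π : Equiv.Perm (Fin n)) (hπ : orbitType π = l)
    (ω₀ : Equiv.Perm (Fin n ⊕ Fin n)) (hω₀ : ω₀ ∈ Kset (n := n) l) :
    Set.ncard {w : Equiv.Perm (Fin n ⊕ Fin n) × Equiv.Perm (Fin n ⊕ Fin n) |
        w.1 ∈ Kset (n := n) m ∧ w.2 ∈ Kset (n := n) v ∧ w.1 * w.2 = ω₀}
      = 2 ^ n * n.factorial * Set.ncard (Gset m v π) := by
  set g := gMatch n
  obtain ⟨c, hcg, hce⟩ : ∃ c : Perm (Fin n ⊕ Fin n),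
      c * g * c⁻¹ = g ∧ c * (ω₀ * g * ω₀⁻¹) * c⁻¹ = bMatch π := by
    have h : orbitType (g * (ω₀ * g * ω₀⁻¹)) = orbitType (g * bMatch π) := by
      rw [(mem_Kset_iff ω₀).1 hω₀, orbitType_gMatch_mul_bMatch, hπ]
    obtain ⟨c, hcg, hce⟩ := exists_permCongr_eq_of_orbitType_eq isMatching_gMatch
      (isMatching_gMatch.conj ω₀) isMatching_gMatch (isMatching_bMatch π) h
    exact ⟨c, by rwa [← permCongr_eq_mul], by rwa [← permCongr_eq_mul]⟩
  calc _ = {ω | ω ∈ Kset m ∧ ω⁻¹ * ω₀ ∈ Kset v}.ncard := ncard_pairs_mul_eq _ _ _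
    _ = ((c * ·) ⁻¹' {ω | ω * g * ω⁻¹ ∈ Gset m v π}).ncard := by
        congr 1
        ext ω
        exact mem_Kset_and_inv_mul_mem_Kset_iff hcg hce ω
    _ = {ω | ω * g * ω⁻¹ ∈ Gset m v π}.ncard :=
        Set.ncard_preimage_of_injective_subset_range (mul_right_injective c)
          (by simp [(mul_left_surjective c).range_eq])
    _ = 2 ^ n * n.factorial * (Gset m v π).ncard := by
        rw [ncard_conj_mem g fun δ hδ => isMatching_gMatch.isConj hδ.1,
          isMatching_gMatch.nat_card_centralizer, Fintype.card_sum, Fintype.card_fin, ← two_mul,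
          Nat.mul_div_cancel_left n two_pos]

theorem double_coset_connection_coefficients
    (n : ℕ) (hn : 1 ≤ n) (l m v : Multiset ℕ)
    (hl : (∀ a ∈ l, 0 < a) ∧ l.sum = n)
    (hm : (∀ a ∈ m, 0 < a) ∧ m.sum = n)
    (hv : (∀ a ∈ v, 0 < a) ∧ v.sum = n)
    (π : Equiv.Perm (Fin n)) (hπ : orbitType π = l)
    (ω₀ : Equiv.Perm (Fin n ⊕ Fin n)) (hω₀ : ω₀ ∈ Kset (n := n) l) :
    Set.ncard {w : Equiv.Perm (Fin n ⊕ Fin n) × Equiv.Perm (Fin n ⊕ Fin n) |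
        w.1 ∈ Kset (n := n) m ∧ w.2 ∈ Kset (n := n) v ∧ w.1 * w.2 = ω₀}
      = 2 ^ n * n.factorial * Set.ncard (Gset m v π) :=
  double_coset_connection_coefficients_general n l m v π hπ ω₀ hω₀
end

section
/- Let X be a finite type and let σ and τ be fixed-point-free involutions of X. Then there exists a multiset ε of positive integers such that the orbit type of the permutation σ∘τ equals ε⊎ε; in particular, every cycle length of σ∘τ (with fixed points counted as cycles of length 1) occurs with even multiplicity, and the parts of ε sum to half the cardinality of X. -/
/-- If a finset is closed under a fixed-point-free involution that preserves `f`,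
then the multiset of `f`-values splits as `ε + ε`. -/
lemma pair_up {α : Type*} [DecidableEq α] (f : α → ℕ) (g : α → α) :
    ∀ t : Finset α, (∀ a ∈ t, g a ∈ t) → (∀ a ∈ t, g (g a) = a) →
      (∀ a ∈ t, g a ≠ a) → (∀ a ∈ t, f (g a) = f a) →
      ∃ ε : Multiset ℕ, t.val.map f = ε + ε := by
  intro t
  induction t using Finset.strongInduction with
  | _ t ih =>
    intro hcl hinv hne hf
    rcases t.eq_empty_or_nonempty with rfl | ⟨a, ha⟩
    · exact ⟨0, by simp⟩
    · have hga : g a ∈ t := hcl a ha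
      have hgane : g a ≠ a := hne a ha
      set t' : Finset α := (t.erase a).erase (g a) with ht'
      have hsub : t' ⊂ t := by
        refine Finset.ssubset_of_subset_of_ssubset ?_ (Finset.erase_ssubset ha)
        exact Finset.erase_subset _ _
      have hmem' : ∀ b, b ∈ t' ↔ b ∈ t ∧ b ≠ a ∧ b ≠ g a := by
        intro b
        simp only [ht', Finset.mem_erase]
        tauto
      have hcl' : ∀ b ∈ t', g b ∈ t' := by
        intro b hb
        rw [hmem'] at hb ⊢
        obtain ⟨hbt, hba, hbga⟩ := hb
        refine ⟨hcl b hbt, ?_, ?_⟩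
        · intro h; apply hbga; rw [← hinv b hbt, h]
        · intro h
          apply hba
          have := congrArg g h
          rwa [hinv b hbt, hinv a ha] at this
      obtain ⟨ε', hε'⟩ := ih t' hsub hcl'
        (fun b hb => hinv b ((hmem' b).mp hb).1)
        (fun b hb => hne b ((hmem' b).mp hb).1)
        (fun b hb => hf b ((hmem' b).mp hb).1)
      have hval : t.val = a ::ₘ g a ::ₘ t'.val := by
        have hga' : g a ∈ t.erase a := Finset.mem_erase.mpr ⟨hgane, hga⟩
        have h2 : (t.erase a).val = g a ::ₘ t'.val := by
          rw [ht', Finset.erase_val]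
          exact (Multiset.cons_erase hga').symm
        rw [← h2, Finset.erase_val]
        exact (Multiset.cons_erase ha).symm
      refine ⟨f a ::ₘ ε', ?_⟩
      rw [hval]
      simp only [Multiset.map_cons, hf a ha, hε']
      rw [Multiset.cons_add, Multiset.add_cons]

theorem orbitType_of_product_of_matchings
    (X : Type) [Fintype X] [DecidableEq X] (σ τ : Equiv.Perm X)
    (hσ1 : ∀ x, σ (σ x) = x) (hσ2 : ∀ x, σ x ≠ x)
    (hτ1 : ∀ x, τ (τ x) = x) (hτ2 : ∀ x, τ x ≠ x) :
    ∃ ε : Multiset ℕ, (∀ a ∈ ε, 0 < a) ∧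
      orbitType (σ * τ) = ε + ε ∧ 2 * ε.sum = Fintype.card X := by
  classical
  set ω : Equiv.Perm X := σ * τ with hω
  have hσσ : σ * σ = 1 := by ext x; simp [hσ1]
  have hττ : τ * τ = 1 := by ext x; simp [hτ1]
  have hσinv : σ⁻¹ = σ := by
    rw [inv_eq_iff_mul_eq_one, hσσ]
  -- τ = σ * ω
  have hτω : τ = σ * ω := by
    rw [hω, ← mul_assoc, hσσ, one_mul]
  -- semiconjugation: σ * ω = ω⁻¹ * σ
  have hτinv : τ⁻¹ = τ := inv_eq_iff_mul_eq_one.mpr hττ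
  have hsc : SemiconjBy σ ω ω⁻¹ := by
    show σ * ω = ω⁻¹ * σ
    calc σ * ω = σ * σ * τ := by rw [hω, mul_assoc]
      _ = τ := by rw [hσσ, one_mul]
      _ = τ * (σ * σ) := by rw [hσσ, mul_one]
      _ = (τ * σ) * σ := by rw [mul_assoc]
      _ = ω⁻¹ * σ := by rw [hω, mul_inv_rev, hσinv, hτinv]
  have hscz : ∀ j : ℤ, σ * ω ^ j = ω ^ (-j) * σ := by
    intro j
    have := hsc.zpow_right j
    rwa [inv_zpow, ← zpow_neg] at this
  have hpt : ∀ (j : ℤ) (y : X), σ ((ω ^ j) y) = (ω ^ (-j)) (σ y) := by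
    intro j y
    have := DFunLike.congr_fun (hscz j) y
    simpa [Equiv.Perm.mul_apply] using this
  -- key: no point is in the same ω-cycle as its σ-image
  have key : ∀ x : X, ¬ ω.SameCycle x (σ x) := by
    rintro x ⟨k, hk⟩
    rcases Int.even_or_odd k with ⟨j, hj⟩ | ⟨j, hj⟩
    · apply hσ2 ((ω ^ j) x)
      rw [hpt j x, ← hk, ← Equiv.Perm.mul_apply, ← zpow_add]
      congr 2
      omega
    · apply hτ2 ((ω ^ j) x)
      have : τ ((ω ^ j) x) = σ ((ω ^ (j + 1)) x) := by
        rw [hτω]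
        simp only [Equiv.Perm.mul_apply]
        congr 1
        rw [← Equiv.Perm.mul_apply, ← zpow_one_add, add_comm]
      rw [this, hpt (j + 1) x, ← hk, ← Equiv.Perm.mul_apply, ← zpow_add]
      congr 2
      omega
  -- Part 1: the cycle type of ω pairs up via c ↦ σ * c⁻¹ * σ.
  have hconjmem : ∀ c ∈ ω.cycleFactorsFinset, σ * c⁻¹ * σ ∈ ω.cycleFactorsFinset := by
    intro c hc
    rw [Equiv.Perm.mem_cycleFactorsFinset_iff] at hc ⊢
    obtain ⟨hcyc, hagree⟩ := hc
    constructor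
    · have : σ * c⁻¹ * σ = σ * c⁻¹ * σ⁻¹ := by rw [hσinv]
      rw [this]
      exact (hcyc.inv).conj
    · intro a ha
      have hrw : σ * c⁻¹ * σ = σ * c⁻¹ * σ⁻¹ := by rw [hσinv]
      have hsupp : (σ * c⁻¹ * σ).support = c.support.map σ.toEmbedding := by
        rw [hrw, Equiv.Perm.support_conj, Equiv.Perm.support_inv]
      rw [hsupp, Finset.mem_map] at ha
      obtain ⟨b, hb, rfl⟩ := ha
      have hbinv : c⁻¹ b ∈ c.support := by
        rwa [← Equiv.Perm.support_inv, Equiv.Perm.apply_mem_support, Equiv.Perm.support_inv]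
      have h1 : ω (c⁻¹ b) = c (c⁻¹ b) := (hagree _ hbinv).symm
      have h2 : ω (c⁻¹ b) = b := by rw [h1]; simp
      show σ (c⁻¹ (σ (σ.toEmbedding b))) = ω (σ.toEmbedding b)
      have hσb : σ.toEmbedding b = σ b := rfl
      rw [hσb, hσ1]
      have : ω (σ b) = σ (ω⁻¹ b) := by
        have := hpt (-1) b
        simpa [zpow_neg, zpow_one] using this.symm
      rw [this]
      congr 1
      have : ω⁻¹ b = c⁻¹ b := by
        have := congrArg (⇑ω⁻¹) h2
        rw [← this]; simp
      rw [this]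
  have hconjinv : ∀ c ∈ ω.cycleFactorsFinset, σ * (σ * c⁻¹ * σ)⁻¹ * σ = c := by
    intro c _
    simp only [mul_inv_rev, inv_inv, hσinv]
    rw [← mul_assoc, ← mul_assoc, hσσ, one_mul, mul_assoc, hσσ, mul_one]
  have hconjne : ∀ c ∈ ω.cycleFactorsFinset, σ * c⁻¹ * σ ≠ c := by
    intro c hc heq
    have hcyc := (Equiv.Perm.mem_cycleFactorsFinset_iff.mp hc).1
    obtain ⟨x, hx⟩ := hcyc.nonempty_support
    have hrw : σ * c⁻¹ * σ = σ * c⁻¹ * σ⁻¹ := by rw [hσinv]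
    have hsupp : (σ * c⁻¹ * σ).support = c.support.map σ.toEmbedding := by
      rw [hrw, Equiv.Perm.support_conj, Equiv.Perm.support_inv]
    have hσx : σ x ∈ c.support := by
      rw [← heq, hsupp, Finset.mem_map]
      exact ⟨x, hx, rfl⟩
    have hceq : c = ω.cycleOf x := Equiv.Perm.cycle_is_cycleOf hx hc
    rw [hceq, Equiv.Perm.mem_support_cycleOf_iff] at hσx
    exact key x hσx.1
  have hconjcard : ∀ c ∈ ω.cycleFactorsFinset,
      (σ * c⁻¹ * σ).support.card = c.support.card := by
    intro c _
    have hrw : σ * c⁻¹ * σ = σ * c⁻¹ * σ⁻¹ := by rw [hσinv]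
    have hsupp : (σ * c⁻¹ * σ).support = c.support.map σ.toEmbedding := by
      rw [hrw, Equiv.Perm.support_conj, Equiv.Perm.support_inv]
    rw [hsupp, Finset.card_map]
  obtain ⟨ε₁, hε₁⟩ := pair_up (fun c => c.support.card) (fun c => σ * c⁻¹ * σ)
    ω.cycleFactorsFinset hconjmem hconjinv hconjne hconjcard
  have hct : ω.cycleType = ε₁ + ε₁ := by
    rw [Equiv.Perm.cycleType_def]
    exact hε₁
  -- Part 2: fixed points pair up via σ.
  set F : Finset X := Finset.univ.filter fun x => ω x = x with hF
  have hFmem : ∀ x, x ∈ F ↔ ω x = x := by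
    intro x; simp [hF]
  have hFcl : ∀ x ∈ F, σ x ∈ F := by
    intro x hx
    rw [hFmem] at hx ⊢
    have := hpt (-1) x
    have h1 : ω (σ x) = σ (ω⁻¹ x) := by simpa using this.symm
    have h2 : ω⁻¹ x = x := by
      have := congrArg (⇑ω⁻¹) hx
      rw [← this]; simp
    rw [h1, h2]
  obtain ⟨ε₂, hε₂⟩ := pair_up (fun _ => 1) σ F hFcl (fun x _ => hσ1 x)
    (fun x _ => hσ2 x) (fun _ _ => rfl)
  have hrep : Multiset.replicate F.card 1 = ε₂ + ε₂ := by
    rw [← hε₂, Multiset.map_const']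
    rfl
  -- assemble
  refine ⟨ε₁ + ε₂, ?_, ?_, ?_⟩
  · intro a ha
    rw [Multiset.mem_add] at ha
    rcases ha with ha | ha
    · have : a ∈ ω.cycleType := by rw [hct, Multiset.mem_add]; exact Or.inl ha
      have := Equiv.Perm.two_le_of_mem_cycleType this
      omega
    · have : a ∈ Multiset.replicate F.card 1 := by
        rw [hrep, Multiset.mem_add]; exact Or.inl ha
      have := Multiset.eq_of_mem_replicate this
      omega
  · show ω.cycleType + Multiset.replicate F.card 1 = (ε₁ + ε₂) + (ε₁ + ε₂)
    rw [hct, hrep]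
    abel
  · have hsum : ω.cycleType.sum + F.card = Fintype.card X := by
      rw [Equiv.Perm.sum_cycleType]
      have hsupp : ω.support.card = (Finset.univ.filter fun x => ¬ ω x = x).card := by
        congr 1
      have h := Finset.card_filter_add_card_filter_not
        (s := (Finset.univ : Finset X)) (p := fun x => ω x = x)
      rw [Finset.card_univ] at h
      rw [hsupp, hF]
      omega
    have h1 : ω.cycleType.sum = ε₁.sum + ε₁.sum := by rw [hct, Multiset.sum_add]
    have h2 : (F.card : ℕ) = ε₂.sum + ε₂.sum := by
      have := congrArg Multiset.sum hrep
      rwa [Multiset.sum_replicate, smul_eq_mul, mul_one, Multiset.sum_add] at this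
    rw [Multiset.sum_add]
    omega
end
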